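/- arXiv:1601.07407 — 2 statements merged into one kernel-verified Lean document; each statement's English description precedes it below -/
import Mathlib

section
/- Let K be a linearly ordered field, Γ₀ a linearly ordered commutative group with zero, and v : K → Γ₀ a valuation (multiplicative, v(0) = 0, v(1) = 1, v(a + b) ≤ max(v(a), v(b))) that is compatible with the order of K, i.e., 0 ≤ a ≤ b implies v(a) ≤ v(b). Then for every n ≥ 0, every integer p ≥ 1, and all points x = (x₁, …, xₙ), y = (y₁, …, yₙ) ∈ Kⁿ one has v(∑_{i=1}^n |xᵢ − yᵢ|^p) = (max_{1 ≤ i ≤ n} v(xᵢ − yᵢ))^p (where for n = 0 both sides are 0). -/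
/-- In a linearly ordered commutative monoid with zero, `0` is the bottom element. -/
noncomputable instance (priority := 10) instOrderBotOfLinearOrderedCommMonoidWithZero
    {Γ₀ : Type*} [LinearOrderedCommMonoidWithZero Γ₀] : OrderBot Γ₀ where
  bot := 0
  bot_le _ := zero_le'

/-!
An order-compatible valuation sees no cancellation in a sum of nonnegative terms: each term is
bounded by the sum, and the ultrametric inequality gives the reverse bound, so `v` of the sum is
the maximum of the `v`-values of the terms. For the terms `|xᵢ - yᵢ| ^ p` these values are
`v (xᵢ - yᵢ) ^ p`, and the monotone map `· ^ p` commutes with the maximum.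
-/

theorem Finset.sup_pow {ι Γ₀ : Type*} [LinearOrderedCommMonoidWithZero Γ₀] (s : Finset ι)
    (f : ι → Γ₀) {p : ℕ} (hp : p ≠ 0) : s.sup f ^ p = s.sup fun i => f i ^ p :=
  Finset.apply_sup_eq_sup_comp_of_linearOrder (· ^ p) (pow_left_mono p)
    (by rw [bot_eq_zero, zero_pow hp])

namespace Valuation

variable {R Γ₀ : Type*} [LinearOrderedCommMonoidWithZero Γ₀]

theorem map_abs [Ring R] [LinearOrder R] (v : Valuation R Γ₀) (a : R) : v |a| = v a := by
  rcases abs_choice a with h | h <;> simp [h]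

theorem map_sum_of_nonneg [Ring R] [PartialOrder R] [IsOrderedAddMonoid R] (v : Valuation R Γ₀)
    (hv : ∀ a b : R, 0 ≤ a → a ≤ b → v a ≤ v b) {ι : Type*} {s : Finset ι} {f : ι → R}
    (hf : ∀ i ∈ s, 0 ≤ f i) : v (∑ i ∈ s, f i) = s.sup fun i => v (f i) :=
  le_antisymm (v.map_sum_le fun _ hi => Finset.le_sup (f := fun i => v (f i)) hi)
    (Finset.sup_le fun i hi => hv _ _ (hf i hi) (Finset.single_le_sum hf hi))

end Valuation

theorem stmt_1 {K Γ₀ : Type*} [Field K] [LinearOrder K] [IsStrictOrderedRing K] [LinearOrderedCommGroupWithZero Γ₀]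
    (v : Valuation K Γ₀)
    (hv : ∀ a b : K, 0 ≤ a → a ≤ b → v a ≤ v b)
    (n p : ℕ) (hp : 1 ≤ p) (x y : Fin n → K) :
    v (∑ i, |x i - y i| ^ p) = (Finset.univ.sup fun i => v (x i - y i)) ^ p := by
  calc v (∑ i, |x i - y i| ^ p) = Finset.univ.sup fun i => v (|x i - y i| ^ p) :=
        v.map_sum_of_nonneg hv fun i _ => by positivity
    _ = Finset.univ.sup fun i => v (x i - y i) ^ p := by simp only [map_pow, v.map_abs]
    _ = (Finset.univ.sup fun i => v (x i - y i)) ^ p :=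
        (Finset.sup_pow _ _ (Nat.one_le_iff_ne_zero.mp hp)).symm
end

section
/- Let K be a real closed field with natural valuation ring A and ideal of infinitesimals I. Let a, x, y ∈ K satisfy y² + (x² − a²)(x² − 1) = 0, with a ∈ I, x ∈ A, and x ∉ I, and set z = y/x. Then z − 1 ∈ A ∖ I, z + 1 ∈ A ∖ I, and −1 < z < 1. -/
/-- A real closed field: a linearly ordered field in which every nonnegative element
is a square and every polynomial of odd degree has a root. -/
def IsRealClosedOrd (K : Type*) [Field K] [LinearOrder K] [IsStrictOrderedRing K] : Prop :=
  (∀ a : K, 0 ≤ a → ∃ b : K, b ^ 2 = a) ∧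
  ∀ p : Polynomial K, Odd p.natDegree → ∃ x : K, p.eval x = 0

/-- The natural valuation ring of a linearly ordered field: the convex hull of `ℚ`,
i.e. the elements bounded in absolute value by a natural number. -/
def natValRing (K : Type*) [Field K] [LinearOrder K] [IsStrictOrderedRing K] : Set K :=
  { a : K | ∃ n : ℕ, |a| ≤ (n : K) }

/-- The ideal of infinitesimals of a linearly ordered field: the maximal ideal of the
natural valuation ring. -/
def infinitesimals (K : Type*) [Field K] [LinearOrder K] [IsStrictOrderedRing K] : Set K :=
  { a : K | ∀ n : ℕ, 0 < n → |a| < 1 / (n : K) }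

/-!
Since `a` is infinitesimal and `x` is not, `a² < x²`, and the equation gives
`z² = (1 - a²/x²)(1 - x²) ≤ 1 - x²` for `z = y/x`. Hence `|z| < 1`, and
`2(1 ∓ z) = (1 - z²) + (1 ∓ z)² ≥ x²`, so `1 ∓ z` cannot be infinitesimal either.
-/

section OrderedField

variable {K : Type*} [Field K] [LinearOrder K] [IsStrictOrderedRing K]

theorem sq_add_div_sq_le_one {a x y : K} (heq : y ^ 2 + (x ^ 2 - a ^ 2) * (x ^ 2 - 1) = 0)
    (hax : a ^ 2 < x ^ 2) : x ^ 2 + (y / x) ^ 2 ≤ 1 := by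
  have hx : 0 < x ^ 2 := lt_of_le_of_lt (sq_nonneg a) hax
  have hx1 : x ^ 2 ≤ 1 := by nlinarith [sq_nonneg y]
  rw [div_pow, ← le_sub_iff_add_le', div_le_iff₀ hx]
  nlinarith [mul_nonneg (sub_nonneg.2 hx1) (sq_nonneg a)]

theorem sq_le_two_mul_one_sub_of_sq_add_sq_le_one {x z : K} (h : x ^ 2 + z ^ 2 ≤ 1) :
    x ^ 2 ≤ 2 * (1 - z) := by
  nlinarith [sq_nonneg (1 - z)]

theorem sq_le_two_mul_one_add_of_sq_add_sq_le_one {x z : K} (h : x ^ 2 + z ^ 2 ≤ 1) :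
    x ^ 2 ≤ 2 * (1 + z) := by
  nlinarith [sq_nonneg (1 + z)]

end OrderedField

namespace infinitesimals

variable {K : Type*} [Field K] [LinearOrder K] [IsStrictOrderedRing K]

theorem abs_lt_abs {a x : K} (ha : a ∈ infinitesimals K) (hx : x ∉ infinitesimals K) :
    |a| < |x| := by
  simp only [infinitesimals, Set.mem_ofPred_eq, not_forall, not_lt] at hx
  obtain ⟨n, hn, hnx⟩ := hx
  exact (ha n hn).trans_le hnx

theorem mem_of_abs_le {b c : K} (hc : c ∈ infinitesimals K) (hbc : |b| ≤ |c|) :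
    b ∈ infinitesimals K :=
  fun n hn => hbc.trans_lt (hc n hn)

theorem add_mem {b c : K} (hb : b ∈ infinitesimals K) (hc : c ∈ infinitesimals K) :
    b + c ∈ infinitesimals K := by
  intro n hn
  have h2n : ((2 * n : ℕ) : K) = 2 * n := by push_cast; ring
  have hb' := hb (2 * n) (by omega)
  have hc' := hc (2 * n) (by omega)
  rw [h2n] at hb' hc'
  calc |b + c| ≤ |b| + |c| := abs_add_le b c
    _ < 1 / (2 * n) + 1 / (2 * n) := add_lt_add hb' hc'
    _ = 1 / n := by field_simp; ring

theorem mem_of_sq_mem {x : K} (hx : x ^ 2 ∈ infinitesimals K) : x ∈ infinitesimals K := by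
  intro n hn
  have hn' : (0 : K) < n := by exact_mod_cast hn
  have h := hx (n ^ 2) (pow_pos hn 2)
  rw [abs_pow, Nat.cast_pow, one_div, ← inv_pow] at h
  rw [one_div]
  exact lt_of_pow_lt_pow_left₀ 2 (by positivity) h

theorem not_mem_of_sq_le_two_mul_abs {x c : K} (hx : x ∉ infinitesimals K)
    (h : x ^ 2 ≤ 2 * |c|) : c ∉ infinitesimals K := fun hc =>
  hx <| mem_of_sq_mem <| mem_of_abs_le (add_mem hc hc) <| by
    rwa [abs_of_nonneg (sq_nonneg x), ← two_mul, abs_mul, abs_two]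

end infinitesimals

theorem stmt_9_general {K : Type*} [Field K] [LinearOrder K] [IsStrictOrderedRing K]
    (a x y : K) (heq : y ^ 2 + (x ^ 2 - a ^ 2) * (x ^ 2 - 1) = 0)
    (ha : a ∈ infinitesimals K) (hxI : x ∉ infinitesimals K) :
    (y / x - 1 ∈ natValRing K ∧ y / x - 1 ∉ infinitesimals K) ∧
    (y / x + 1 ∈ natValRing K ∧ y / x + 1 ∉ infinitesimals K) ∧
    -1 < y / x ∧ y / x < 1 := by
  have hax : a ^ 2 < x ^ 2 := sq_lt_sq.2 (infinitesimals.abs_lt_abs ha hxI)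
  have hz := sq_add_div_sq_le_one heq hax
  have hz1 : |y / x| < 1 := by
    rw [← sq_lt_one_iff_abs_lt_one]
    linarith [lt_of_le_of_lt (sq_nonneg a) hax]
  obtain ⟨hgt, hlt⟩ := abs_lt.1 hz1
  refine ⟨⟨⟨2, ?_⟩, ?_⟩, ⟨⟨2, ?_⟩, ?_⟩, hgt, hlt⟩
  · rw [abs_le]; constructor <;> push_cast <;> linarith
  · refine infinitesimals.not_mem_of_sq_le_two_mul_abs hxI ?_
    linarith [sq_le_two_mul_one_sub_of_sq_add_sq_le_one hz, neg_abs_le (y / x - 1)]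
  · rw [abs_le]; constructor <;> push_cast <;> linarith
  · refine infinitesimals.not_mem_of_sq_le_two_mul_abs hxI ?_
    linarith [sq_le_two_mul_one_add_of_sq_add_sq_le_one hz, le_abs_self (y / x + 1)]

theorem stmt_9 {K : Type*} [Field K] [LinearOrder K] [IsStrictOrderedRing K] (hK : IsRealClosedOrd K)
    (a x y : K) (heq : y ^ 2 + (x ^ 2 - a ^ 2) * (x ^ 2 - 1) = 0)
    (ha : a ∈ infinitesimals K) (hxA : x ∈ natValRing K) (hxI : x ∉ infinitesimals K) :
    (y / x - 1 ∈ natValRing K ∧ y / x - 1 ∉ infinitesimals K) ∧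
    (y / x + 1 ∈ natValRing K ∧ y / x + 1 ∉ infinitesimals K) ∧
    -1 < y / x ∧ y / x < 1 :=
  stmt_9_general a x y heq ha hxI
end
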